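/- Let k be a commutative ring, B₁ and B₂ be k-algebras, and τ an involution (anti-automorphism of order 2) on B := B₁ × B₂ such that τ(x,y) = (y,x) for all x,y in the image of k embedded diagonally. Then (B,τ) is isomorphic as a k-algebra with involution to (B₁ × B₁^op, (x,y) ↦ (y,x)). -/
import Mathlib


/-- If `τ` is an involution on `B = B₁ × B₂` which switches the two factors of the
center `k × k` (i.e. `τ (x, y) = (y, x)` for `x, y ∈ k`), then `(B, τ)` is isomorphic,
as a `k`-algebra with involution, to `(B₁ × B₁ᵐᵒᵖ, (x, y) ↦ (y, x))`. -/
theorem stmt2 {k B₁ B₂ : Type*} [CommRing k] [Ring B₁] [Ring B₂]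
    [Algebra k B₁] [Algebra k B₂]
    (τ : B₁ × B₂ → B₁ × B₂)
    (hadd : ∀ a b, τ (a + b) = τ a + τ b)
    (hmul : ∀ a b, τ (a * b) = τ b * τ a)
    (hinvol : ∀ a, τ (τ a) = a)
    (hone : τ 1 = 1)
    (hk : ∀ x y : k, τ (algebraMap k B₁ x, algebraMap k B₂ y)
        = (algebraMap k B₁ y, algebraMap k B₂ x)) :
    ∃ e : (B₁ × B₂) ≃+* (B₁ × B₁ᵐᵒᵖ),
      (∀ a, e (τ a) = ((e a).2.unop, MulOpposite.op (e a).1)) ∧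
      (∀ x y : k, e (algebraMap k B₁ x, algebraMap k B₂ y)
          = (algebraMap k B₁ x, MulOpposite.op (algebraMap k B₁ y))) := by
  have hτ10 : τ (1, 0) = (0, 1) := by
    have := hk 1 0; simpa using this
  have hτ01 : τ (0, 1) = (1, 0) := by
    have := hk 0 1; simpa using this
  set f : B₂ → B₁ := fun b => (τ (0, b)).1 with hf
  set g : B₁ → B₂ := fun a => (τ (a, 0)).2 with hg
  have hτ0b : ∀ b : B₂, τ (0, b) = (f b, 0) := by
    intro b
    have h1 : ((0 : B₁), b) = (0, 1) * (0, b) := by simp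
    have h2 : τ (0, b) = τ (0, b) * (1, 0) := by
      conv_lhs => rw [h1, hmul, hτ01]
    ext
    · rfl
    · rw [h2]; simp
  have hτa0 : ∀ a : B₁, τ (a, 0) = (0, g a) := by
    intro a
    have h1 : (a, (0 : B₂)) = (1, 0) * (a, 0) := by simp
    have h2 : τ (a, 0) = τ (a, 0) * (0, 1) := by
      conv_lhs => rw [h1, hmul, hτ10]
    ext
    · rw [h2]; simp
    · rfl
  have hτ : ∀ (a : B₁) (b : B₂), τ (a, b) = (f b, g a) := by
    intro a b
    have : ((a : B₁), b) = (a, 0) + (0, b) := by simp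
    rw [this, hadd, hτa0, hτ0b]
    simp
  have hfg : ∀ a : B₁, f (g a) = a := by
    intro a
    have := hinvol (a, 0)
    rw [hτa0, hτ0b] at this
    exact congrArg Prod.fst this
  have hgf : ∀ b : B₂, g (f b) = b := by
    intro b
    have := hinvol (0, b)
    rw [hτ0b, hτa0] at this
    exact congrArg Prod.snd this
  have hfadd : ∀ b b' : B₂, f (b + b') = f b + f b' := by
    intro b b'
    have : ((0 : B₁), b + b') = (0, b) + (0, b') := by simp
    rw [hf]; simp only
    rw [this, hadd]; rfl
  have hfmul : ∀ b b' : B₂, f (b * b') = f b' * f b := by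
    intro b b'
    have h1 : ((0 : B₁), b * b') = (0, b) * (0, b') := by simp
    have h2 : (f (b * b'), (0 : B₂)) = (f b' * f b, 0) := by
      rw [← hτ0b, h1, hmul, hτ0b, hτ0b]; simp
    exact congrArg Prod.fst h2
  have hfone : f 1 = 1 := congrArg Prod.fst hτ01
  refine ⟨{
    toFun := fun p => (p.1, MulOpposite.op (f p.2))
    invFun := fun q => (q.1, g q.2.unop)
    left_inv := by intro p; simp [hgf]
    right_inv := by intro q; simp [hfg]
    map_add' := by intro p q; ext <;> simp [hfadd]
    map_mul' := by
      intro p q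
      ext
      · rfl
      · show MulOpposite.op (f (p.2 * q.2)) = _
        rw [hfmul]
        rfl }, ?_, ?_⟩
  · rintro ⟨a, b⟩
    rw [hτ a b]
    show (f b, MulOpposite.op (f (g a))) = _
    rw [hfg]
    rfl
  · intro x y
    have h0 : τ ((0 : B₁), algebraMap k B₂ y) = (algebraMap k B₁ y, 0) := by
      have := hk 0 y; simpa using this
    have hfy : f (algebraMap k B₂ y) = algebraMap k B₁ y := by
      rw [hτ0b] at h0
      exact congrArg Prod.fst h0
    ext
    · rfl
    · show MulOpposite.op (f (algebraMap k B₂ y)) = _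
      rw [hfy]
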